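/- (D preserves valid matrix-exponential representations.) Let ε ∈ (0, Δ), suppose α e^{Sx} s ≥ 0 and α e^{Sx} e > 0 for all x ≥ 0, and define D := ∫_0^{Δ−ε} e^{Sy} s · (α e^{Sy} / (α e^{Sy} e)) dy + (∫_{Δ−ε}^∞ e^{Sy} s dy) · (α e^{S(Δ−ε)} / (α e^{S(Δ−ε)} e)). Let a be any 1×p real row vector with a e^{Sx} s ≥ 0 for all x ≥ 0 and a e = 1. Then (a D) e^{Sx} s ≥ 0 for all x ≥ 0 and (a D) e = 1. -/

import Mathlib

open MeasureTheory Matrix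

attribute [local instance] Matrix.normedAddCommGroup Matrix.normedSpace

/-- `e^{xS}` : the matrix exponential of `x • S`. -/
noncomputable def mexp {p : ℕ} (S : Matrix (Fin p) (Fin p) ℝ) (x : ℝ) :
    Matrix (Fin p) (Fin p) ℝ := NormedSpace.exp (x • S)

/-- The matrix `D = ∫₀^{Δ-ε} e^{Sy} s (α e^{Sy}/(α e^{Sy} e)) dy
  + (∫_{Δ-ε}^∞ e^{Sy} s dy)(α e^{S(Δ-ε)}/(α e^{S(Δ-ε)} e))`,
where `e` is the all-ones vector and `s = -S e`. -/
noncomputable def Dmat {p : ℕ} (S : Matrix (Fin p) (Fin p) ℝ) (α : Fin p → ℝ)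
    (Δ ε : ℝ) : Matrix (Fin p) (Fin p) ℝ :=
  Matrix.of fun i j =>
    (∫ y in Set.Ioc (0 : ℝ) (Δ - ε),
        (mexp S y *ᵥ -(S *ᵥ fun _ => (1 : ℝ))) i
          * ((α ᵥ* mexp S y) j / ((α ᵥ* mexp S y) ⬝ᵥ fun _ => (1 : ℝ))))
    + (∫ y in Set.Ioi (Δ - ε), (mexp S y *ᵥ -(S *ᵥ fun _ => (1 : ℝ))) i)
        * ((α ᵥ* mexp S (Δ - ε)) j / ((α ᵥ* mexp S (Δ - ε)) ⬝ᵥ fun _ => (1 : ℝ)))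

/-!
For every vector `w`, `(a D) w` equals
`∫₀^{Δ-ε} (a e^{Sy} s) (α e^{Sy} w)/(α e^{Sy} e) dy
  + (∫_{Δ-ε}^∞ a e^{Sy} s dy) (α e^{S(Δ-ε)} w)/(α e^{S(Δ-ε)} e)`.
With `w = e^{Sx} s` every factor is nonnegative, because `α e^{Sy} e^{Sx} s = α e^{S(x+y)} s`.
With `w = e` both quotients are `1`, and the two integrals add up to `∫₀^∞ a e^{Sy} s dy = a e`:
`y ↦ a e^{Sy} e` has derivative `a e^{Sy} S e = -a e^{Sy} s` and tends to `0`.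
-/

open Set Filter Topology

section

variable {X m n : Type*} [Fintype m] [Fintype n] [MeasurableSpace X] {μ : Measure X}

theorem vecMul_of_integral_dotProduct (F : X → Matrix m n ℝ)
    (hF : ∀ i j, Integrable (fun x => F x i j) μ) (a : m → ℝ) (w : n → ℝ) :
    (a ᵥ* of fun i j => ∫ x, F x i j ∂μ) ⬝ᵥ w = ∫ x, (a ᵥ* F x) ⬝ᵥ w ∂μ := by
  simp only [dotProduct, vecMul, of_apply, Finset.sum_mul, ← integral_const_mul,
    ← integral_mul_const]
  rw [integral_finsetSum _ fun j _ => integrable_finsetSum _ fun i _ =>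
    ((hF i j).const_mul _).mul_const _]
  refine Finset.sum_congr rfl fun j _ => ?_
  rw [integral_finsetSum _ fun i _ => ((hF i j).const_mul _).mul_const _]

end

theorem abs_vecMul_dotProduct_le {m n : Type*} [Fintype m] [Fintype n] (u : m → ℝ) (v : n → ℝ)
    (M : Matrix m n ℝ) : |(u ᵥ* M) ⬝ᵥ v| ≤ (∑ i, |u i|) * (∑ j, |v j|) * ‖M‖ := by
  rw [Finset.sum_mul_sum, Finset.sum_mul, ← dotProduct_mulVec]
  simp only [dotProduct, mulVec, Finset.mul_sum, Finset.sum_mul]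
  refine (Finset.abs_sum_le_sum_abs _ _).trans (Finset.sum_le_sum fun i _ =>
    (Finset.abs_sum_le_sum_abs _ _).trans (Finset.sum_le_sum fun j _ => ?_))
  have := norm_entry_le_entrywise_sup_norm M (i := i) (j := j)
  rw [Real.norm_eq_abs] at this
  rw [abs_mul, abs_mul, mul_assoc, mul_comm |v j|]
  gcongr

section mexp

variable {p : ℕ} (S : Matrix (Fin p) (Fin p) ℝ)

theorem mexp_add (x y : ℝ) : mexp S (x + y) = mexp S x * mexp S y := by
  rw [mexp, add_smul]
  exact Matrix.exp_add_of_commute _ _ ((Commute.refl S).smul_left x |>.smul_right y)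

theorem hasDerivAt_mexp (t : ℝ) : HasDerivAt (mexp S) (mexp S t * S) t := by
  let _ : NormedAddCommGroup (Matrix (Fin p) (Fin p) ℝ) := Matrix.linftyOpNormedAddCommGroup
  let _ : NormedSpace ℝ (Matrix (Fin p) (Fin p) ℝ) := Matrix.linftyOpNormedSpace
  let _ : NormedRing (Matrix (Fin p) (Fin p) ℝ) := Matrix.linftyOpNormedRing
  let _ : NormedAlgebra ℝ (Matrix (Fin p) (Fin p) ℝ) := Matrix.linftyOpNormedAlgebra
  -- The slope characterisation only sees the topology, which all matrix norms share.
  exact hasDerivAt_iff_tendsto_slope.2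
    (hasDerivAt_iff_tendsto_slope.1 (hasDerivAt_exp_smul_const (𝕂 := ℝ) S t))

theorem continuous_mexp : Continuous (mexp S) :=
  continuous_iff_continuousAt.2 fun t => (hasDerivAt_mexp S t).continuousAt

theorem hasDerivAt_vecMul_mexp_dotProduct (u v : Fin p → ℝ) (t : ℝ) :
    HasDerivAt (fun t => (u ᵥ* mexp S t) ⬝ᵥ v) ((u ᵥ* mexp S t) ⬝ᵥ (S *ᵥ v)) t := by
  let L : Matrix (Fin p) (Fin p) ℝ →L[ℝ] ℝ := LinearMap.toContinuousLinearMap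
    { toFun := fun M => (u ᵥ* M) ⬝ᵥ v
      map_add' := fun A B => by rw [vecMul_add, add_dotProduct]
      map_smul' := fun c A => by rw [vecMul_smul, smul_dotProduct]; rfl }
  rw [dotProduct_mulVec, vecMul_vecMul]
  exact L.hasFDerivAt.comp_hasDerivAt t (hasDerivAt_mexp S t)

variable {S}

theorem integrableOn_vecMul_mexp_dotProduct
    (hSint : IntegrableOn (fun x : ℝ => ‖mexp S x‖) (Ici 0)) (u v : Fin p → ℝ) :
    IntegrableOn (fun y => (u ᵥ* mexp S y) ⬝ᵥ v) (Ici 0) :=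
  (hSint.const_mul ((∑ i, |u i|) * (∑ j, |v j|))).mono'
    ((continuous_const.matrix_vecMul (continuous_mexp S)).dotProduct
      continuous_const).aestronglyMeasurable
    (ae_of_all _ fun y => abs_vecMul_dotProduct_le u v (mexp S y))

theorem tendsto_vecMul_mexp_dotProduct (hS0 : Tendsto (fun x : ℝ => mexp S x) atTop (𝓝 0))
    (u v : Fin p → ℝ) : Tendsto (fun y => (u ᵥ* mexp S y) ⬝ᵥ v) atTop (𝓝 0) := by
  refine squeeze_zero_norm (fun y => abs_vecMul_dotProduct_le u v (mexp S y)) ?_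
  simpa using hS0.norm.const_mul ((∑ i, |u i|) * (∑ j, |v j|))

theorem integral_Ioi_vecMul_mexp_dotProduct_neg_mulVec
    (hS0 : Tendsto (fun x : ℝ => mexp S x) atTop (𝓝 0))
    (hSint : IntegrableOn (fun x : ℝ => ‖mexp S x‖) (Ici 0)) (u v : Fin p → ℝ) :
    ∫ y in Ioi 0, (u ᵥ* mexp S y) ⬝ᵥ -(S *ᵥ v) = u ⬝ᵥ v := by
  simp only [dotProduct_neg, integral_neg]
  rw [integral_Ioi_of_hasDerivAt_of_tendsto' (fun y _ => hasDerivAt_vecMul_mexp_dotProduct S u v y)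
    ((integrableOn_vecMul_mexp_dotProduct hSint u _).mono_set Ioi_subset_Ici_self)
    (tendsto_vecMul_mexp_dotProduct hS0 u v)]
  simp [mexp]

end mexp

section Dmat

variable {p : ℕ} {S : Matrix (Fin p) (Fin p) ℝ} {α : Fin p → ℝ} {Δ ε : ℝ}

theorem vecMul_Dmat_dotProduct (hSint : IntegrableOn (fun x : ℝ => ‖mexp S x‖) (Ici 0))
    (hα : ∀ y ∈ Icc 0 (Δ - ε), (α ᵥ* mexp S y) ⬝ᵥ (fun _ => (1 : ℝ)) ≠ 0) (hT : 0 ≤ Δ - ε)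
    (a w : Fin p → ℝ) :
    (a ᵥ* Dmat S α Δ ε) ⬝ᵥ w =
      (∫ y in Ioc 0 (Δ - ε), (a ᵥ* mexp S y) ⬝ᵥ -(S *ᵥ fun _ => (1 : ℝ)) *
          ((α ᵥ* mexp S y) ⬝ᵥ w / ((α ᵥ* mexp S y) ⬝ᵥ fun _ => (1 : ℝ))))
      + (∫ y in Ioi (Δ - ε), (a ᵥ* mexp S y) ⬝ᵥ -(S *ᵥ fun _ => (1 : ℝ))) *
          ((α ᵥ* mexp S (Δ - ε)) ⬝ᵥ w / ((α ᵥ* mexp S (Δ - ε)) ⬝ᵥ fun _ => (1 : ℝ))) := by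
  set T := Δ - ε
  set f : ℝ → Fin p → ℝ := fun y => mexp S y *ᵥ -(S *ᵥ fun _ => (1 : ℝ))
  set g : ℝ → Fin p → ℝ := fun y j => (α ᵥ* mexp S y) j / ((α ᵥ* mexp S y) ⬝ᵥ fun _ => 1)
  have hg (y : ℝ) : g y ⬝ᵥ w = (α ᵥ* mexp S y) ⬝ᵥ w / ((α ᵥ* mexp S y) ⬝ᵥ fun _ => 1) := by
    simp only [g, dotProduct, Finset.sum_div, div_mul_eq_mul_div]
  have hD : Dmat S α Δ ε = (of fun i j => ∫ y in Ioc 0 T, vecMulVec (f y) (g y) i j)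
      + of fun i j => ∫ y in Ioi T, vecMulVec (f y) (g T) i j := by
    ext i j
    simp only [Dmat, Matrix.add_apply, of_apply, vecMulVec_apply, integral_mul_const, f, g, T]
  have hf_Ioi (i : Fin p) : IntegrableOn (fun y => f y i) (Ioi T) := by
    simpa only [f, ← dotProduct_mulVec, single_one_dotProduct] using
      (integrableOn_vecMul_mexp_dotProduct hSint (Pi.single i 1) _).mono_set (Ioi_subset_Ici hT)
  have hfg_Ioc (i j : Fin p) : IntegrableOn (fun y => f y i * g y j) (Ioc 0 T) := by
    refine (ContinuousOn.integrableOn_Icc ?_).mono_set Ioc_subset_Icc_self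
    have := continuous_mexp S
    fun_prop (disch := exact hα _ ‹_›)
  rw [hD, vecMul_add, add_dotProduct,
    vecMul_of_integral_dotProduct (fun y => vecMulVec (f y) (g y)) hfg_Ioc,
    vecMul_of_integral_dotProduct (fun y => vecMulVec (f y) (g T))
      fun i j => (hf_Ioi i).mul_const (g T j)]
  simp only [vecMul_vecMulVec, smul_dotProduct, smul_eq_mul, hg, integral_mul_const, f,
    dotProduct_mulVec]

theorem vecMul_Dmat_dotProduct_nonneg (hSint : IntegrableOn (fun x : ℝ => ‖mexp S x‖) (Ici 0))
    (hα : ∀ y ∈ Icc 0 (Δ - ε), 0 < (α ᵥ* mexp S y) ⬝ᵥ (fun _ => (1 : ℝ))) (hT : 0 ≤ Δ - ε)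
    {a w : Fin p → ℝ} (ha : ∀ x : ℝ, 0 ≤ x → 0 ≤ (a ᵥ* mexp S x) ⬝ᵥ -(S *ᵥ fun _ => (1 : ℝ)))
    (hw : ∀ y ∈ Icc 0 (Δ - ε), 0 ≤ (α ᵥ* mexp S y) ⬝ᵥ w) :
    0 ≤ (a ᵥ* Dmat S α Δ ε) ⬝ᵥ w := by
  rw [vecMul_Dmat_dotProduct hSint (fun y hy => (hα y hy).ne') hT]
  have hT' : Δ - ε ∈ Icc 0 (Δ - ε) := right_mem_Icc.2 hT
  refine add_nonneg (setIntegral_nonneg measurableSet_Ioc fun y hy => ?_)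
    (mul_nonneg (setIntegral_nonneg measurableSet_Ioi fun y hy => ha y (hT.trans hy.le))
      (div_nonneg (hw _ hT') (hα _ hT').le))
  have hy' : y ∈ Icc 0 (Δ - ε) := Ioc_subset_Icc_self hy
  exact mul_nonneg (ha y hy'.1) (div_nonneg (hw y hy') (hα y hy').le)

theorem vecMul_Dmat_dotProduct_one (hS0 : Tendsto (fun x : ℝ => mexp S x) atTop (𝓝 0))
    (hSint : IntegrableOn (fun x : ℝ => ‖mexp S x‖) (Ici 0))
    (hα : ∀ y ∈ Icc 0 (Δ - ε), (α ᵥ* mexp S y) ⬝ᵥ (fun _ => (1 : ℝ)) ≠ 0) (hT : 0 ≤ Δ - ε)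
    (a : Fin p → ℝ) :
    (a ᵥ* Dmat S α Δ ε) ⬝ᵥ (fun _ => (1 : ℝ)) = a ⬝ᵥ (fun _ => (1 : ℝ)) := by
  have hf := integrableOn_vecMul_mexp_dotProduct hSint a (-(S *ᵥ fun _ => (1 : ℝ)))
  rw [vecMul_Dmat_dotProduct hSint hα hT, div_self (hα _ (right_mem_Icc.2 hT)), mul_one,
    setIntegral_congr_fun measurableSet_Ioc fun y hy => by
      rw [div_self (hα y (Ioc_subset_Icc_self hy)), mul_one],
    ← setIntegral_union (Ioc_disjoint_Ioi le_rfl) measurableSet_Ioi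
      (hf.mono_set fun y hy => hy.1.le) (hf.mono_set fun y hy => hT.trans hy.le),
    Ioc_union_Ioi_eq_Ioi hT, integral_Ioi_vecMul_mexp_dotProduct_neg_mulVec hS0 hSint]

end Dmat

theorem Dmat_preserves_ME_representations_general
    (p : ℕ) (S : Matrix (Fin p) (Fin p) ℝ)
    (hS0 : Filter.Tendsto (fun x : ℝ => mexp S x) Filter.atTop (nhds 0))
    (hSint : IntegrableOn (fun x : ℝ => ‖mexp S x‖) (Set.Ici 0))
    (α : Fin p → ℝ) (Δ ε : ℝ) (hε : ε ∈ Set.Ioo 0 Δ)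
    (hαnn : ∀ x : ℝ, 0 ≤ x →
      0 ≤ (α ᵥ* mexp S x) ⬝ᵥ -(S *ᵥ fun _ => (1 : ℝ)))
    (hαpos : ∀ x : ℝ, 0 ≤ x → 0 < (α ᵥ* mexp S x) ⬝ᵥ (fun _ => (1 : ℝ)))
    (a : Fin p → ℝ)
    (hann : ∀ x : ℝ, 0 ≤ x →
      0 ≤ (a ᵥ* mexp S x) ⬝ᵥ -(S *ᵥ fun _ => (1 : ℝ)))
    (hae : a ⬝ᵥ (fun _ => (1 : ℝ)) = 1) :
    (∀ x : ℝ, 0 ≤ x →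
      0 ≤ ((a ᵥ* Dmat S α Δ ε) ᵥ* mexp S x) ⬝ᵥ -(S *ᵥ fun _ => (1 : ℝ)))
    ∧ (a ᵥ* Dmat S α Δ ε) ⬝ᵥ (fun _ => (1 : ℝ)) = 1 := by
  have hT : 0 ≤ Δ - ε := sub_nonneg.2 hε.2.le
  have hαpos' : ∀ y ∈ Icc 0 (Δ - ε), 0 < (α ᵥ* mexp S y) ⬝ᵥ (fun _ => (1 : ℝ)) :=
    fun y hy => hαpos y hy.1
  refine ⟨fun x hx => ?_, ?_⟩
  · rw [← dotProduct_mulVec]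
    refine vecMul_Dmat_dotProduct_nonneg hSint hαpos' hT hann fun y hy => ?_
    rw [dotProduct_mulVec, vecMul_vecMul, ← mexp_add]
    exact hαnn (y + x) (add_nonneg hy.1 hx)
  · rw [vecMul_Dmat_dotProduct_one hS0 hSint (fun y hy => (hαpos' y hy).ne') hT, hae]

/-- `D` preserves valid matrix-exponential representations:
if `a e^{Sx} s ≥ 0` for all `x ≥ 0` and `a e = 1`, then the same holds for `a D`. -/
theorem Dmat_preserves_ME_representations
    (p : ℕ) (hp : 1 ≤ p) (S : Matrix (Fin p) (Fin p) ℝ)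
    (hS0 : Filter.Tendsto (fun x : ℝ => mexp S x) Filter.atTop (nhds 0))
    (hSint : IntegrableOn (fun x : ℝ => ‖mexp S x‖) (Set.Ici 0))
    (α : Fin p → ℝ) (Δ ε : ℝ) (hΔ : 0 < Δ) (hε : ε ∈ Set.Ioo 0 Δ)
    (hαnn : ∀ x : ℝ, 0 ≤ x →
      0 ≤ (α ᵥ* mexp S x) ⬝ᵥ -(S *ᵥ fun _ => (1 : ℝ)))
    (hαpos : ∀ x : ℝ, 0 ≤ x → 0 < (α ᵥ* mexp S x) ⬝ᵥ (fun _ => (1 : ℝ)))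
    (a : Fin p → ℝ)
    (hann : ∀ x : ℝ, 0 ≤ x →
      0 ≤ (a ᵥ* mexp S x) ⬝ᵥ -(S *ᵥ fun _ => (1 : ℝ)))
    (hae : a ⬝ᵥ (fun _ => (1 : ℝ)) = 1) :
    (∀ x : ℝ, 0 ≤ x →
      0 ≤ ((a ᵥ* Dmat S α Δ ε) ᵥ* mexp S x) ⬝ᵥ -(S *ᵥ fun _ => (1 : ℝ)))
    ∧ (a ᵥ* Dmat S α Δ ε) ⬝ᵥ (fun _ => (1 : ℝ)) = 1 :=
  Dmat_preserves_ME_representations_general p S hS0 hSint α Δ ε hε hαnn hαpos a hann hae
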